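/- For every real number λ with λ > 1, one has (24/7)·(λ²−λ+1)·F(11/3, 1/3, 13/3; 1/λ) − (10/21)·(λ+1)·(7λ²−10λ+7)·F(8/3, 1/3, 10/3; 1/λ) + 2·λ·(1−λ)²·F(5/3, 1/3, 7/3; 1/λ) = −(4/3)·(λ−1)^{1/3}·λ^{8/3}. -/

import Mathlib

open scoped BigOperators

/-- The Gauss hypergeometric series `F(a,b,c;z)`. -/
noncomputable def hypF (a b c z : ℝ) : ℝ :=
  ∑' n : ℕ,
    (Polynomial.eval a (ascPochhammer ℝ n) * Polynomial.eval b (ascPochhammer ℝ n) /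
      (Polynomial.eval c (ascPochhammer ℝ n) * (n.factorial : ℝ))) * z ^ n

/-! Put z = 1/λ and multiply by z³: the claim becomes the power-series identity
`24/7 z(1 - z + z²) F(11/3,1/3,13/3;z) - 10/21 (7 - 3z - 3z² + 7z³) F(8/3,1/3,10/3;z)
  + 2(1 - z)² F(5/3,1/3,7/3;z) = -4/3 (1 - z)^(1/3)` on `|z| < 1`,
where `(1 - z)^(1/3) = F(-1/3,1/3,1/3;z)` is the binomial series. All four series have the form
`F(-1/3 + k, 1/3, 1/3 + k; z)`, and `(a)_k (a + k)_n = (a)_n (a + n)_k` makes their coefficients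
rational functions of `n` times those of the binomial series, so comparing coefficients of `z^n`
leaves a rational-function identity in `n`. -/

open Polynomial

theorem ascPochhammer_eval_mul_eval_add {S : Type*} [CommSemiring S] (a : S) (k n : ℕ) :
    (ascPochhammer S k).eval a * (ascPochhammer S n).eval (a + k) =
      (ascPochhammer S (k + n)).eval a := by
  rw [← ascPochhammer_mul, eval_mul, eval_comp]
  simp

theorem ascPochhammer_eval_ne_zero {K : Type*} [Field K] [CharZero K] {c : K}
    (hc : ∀ k : ℕ, (k : K) ≠ -c) (n : ℕ) : (ascPochhammer K n).eval c ≠ 0 := by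
  simp [hc]

theorem ordinaryHypergeometricCoefficient_add_natCast {K : Type*} [Field K] [CharZero K]
    (a b : K) {c : K} (hc : ∀ k : ℕ, (k : K) ≠ -c) (k n : ℕ) :
    ordinaryHypergeometricCoefficient (a + k) b (c + k) n *
        ((ascPochhammer K k).eval a * (ascPochhammer K k).eval (c + n)) =
      ordinaryHypergeometricCoefficient a b c n *
        ((ascPochhammer K k).eval (a + n) * (ascPochhammer K k).eval c) := by
  have hc' := ascPochhammer_eval_ne_zero hc
  have hca := ascPochhammer_eval_mul_eval_add c k n
  have hck : (ascPochhammer K n).eval (c + k) ≠ 0 :=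
    right_ne_zero_of_mul (hca ▸ hc' (k + n))
  have ha := ascPochhammer_eval_mul_eval_add a k n
  have ha' := ascPochhammer_eval_mul_eval_add a n k
  have hc'' := ascPochhammer_eval_mul_eval_add c n k
  rw [add_comm n k] at ha' hc''
  have hfac : (n.factorial : K) ≠ 0 := Nat.cast_ne_zero.mpr n.factorial_ne_zero
  simp only [ordinaryHypergeometricCoefficient]
  field_simp
  rw [eq_div_iff (hc' n)]
  linear_combination (ascPochhammer K n).eval b *
    ((ascPochhammer K n).eval c * (ascPochhammer K k).eval (c + n) * ha
      + (ascPochhammer K (k + n)).eval a * hc''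
      - (ascPochhammer K n).eval a * (ascPochhammer K k).eval (a + n) * hca
      - (ascPochhammer K (k + n)).eval c * ha')

theorem natCast_ne_neg_of_pos {R : Type*} [Ring R] [PartialOrder R] [IsOrderedRing R] {c : R}
    (hc : 0 < c) (k : ℕ) : (k : R) ≠ -c :=
  ((neg_neg_of_pos hc).trans_le k.cast_nonneg).ne'

theorem ordinaryHypergeometricCoefficient_succ {K : Type*} [Field K] [CharZero K]
    (a b : K) {c : K} (hc : ∀ k : ℕ, (k : K) ≠ -c) (n : ℕ) :
    ordinaryHypergeometricCoefficient a b c (n + 1) * ((c + n) * (n + 1)) =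
      ordinaryHypergeometricCoefficient a b c n * ((a + n) * (b + n)) := by
  have hc' := ascPochhammer_eval_ne_zero hc
  have hcn : c + n ≠ 0 := fun h => hc n (by linear_combination h)
  simp only [ordinaryHypergeometricCoefficient, ascPochhammer_succ_eval, Nat.factorial_succ]
  push_cast
  field_simp

theorem one_le_radius_ordinaryHypergeometricSeries {𝕂 𝔸 : Type*} [RCLike 𝕂]
    [NormedDivisionRing 𝔸] [NormedAlgebra 𝕂 𝔸] {a b c : 𝕂} (hc : ∀ k : ℕ, (k : 𝕂) ≠ -c) :
    1 ≤ (ordinaryHypergeometricSeries 𝔸 a b c).radius := by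
  by_cases hab : ∀ k : ℕ, (k : 𝕂) ≠ -a ∧ (k : 𝕂) ≠ -b
  · rw [ordinaryHypergeometricSeries_radius_eq_one _ _ _ _ fun k => ⟨(hab k).1, (hab k).2, hc k⟩]
  · push Not at hab
    obtain ⟨k, hk⟩ := hab
    by_cases ha : (k : 𝕂) = -a
    · rw [neg_eq_iff_eq_neg.mp ha.symm, ordinaryHypergeometric_radius_top_of_neg_nat₁]
      exact le_top
    · rw [neg_eq_iff_eq_neg.mp (hk ha).symm, ordinaryHypergeometric_radius_top_of_neg_nat₂]
      exact le_top

theorem hypF_eq_tsum (a b c z : ℝ) :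
    hypF a b c z = ∑' n, ordinaryHypergeometricCoefficient a b c n * z ^ n :=
  tsum_congr fun n => by ring

theorem hasSum_hypF (a b c : ℝ) {z : ℝ} (hc : ∀ k : ℕ, (k : ℝ) ≠ -c) (hz : |z| < 1) :
    HasSum (fun n => ordinaryHypergeometricCoefficient a b c n * z ^ n) (hypF a b c z) := by
  have hz' : ‖z‖ₑ < (ordinaryHypergeometricSeries ℝ a b c).radius :=
    lt_of_lt_of_le (by simpa [enorm_eq_nnnorm, ← NNReal.coe_lt_one] using hz)
      (one_le_radius_ordinaryHypergeometricSeries hc)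
  have := (ordinaryHypergeometricSeries ℝ a b c).summable (mem_eball_zero_iff.mpr hz')
  simp only [ordinaryHypergeometricSeries, FormalMultilinearSeries.ofScalars_apply_eq,
    smul_eq_mul] at this
  rw [hypF_eq_tsum]
  exact this.hasSum

theorem hasSum_one_sub_rpow (a b : ℝ) (hb : ∀ k : ℕ, (k : ℝ) ≠ -b) {z : ℝ} (hz : |z| < 1) :
    HasSum (fun n => ordinaryHypergeometricCoefficient (-a) b b n * z ^ n) ((1 - z) ^ a) := by
  have := Real.one_add_rpow_hasFPowerSeriesOnBall_zero (a := a) |>.hasSum (y := -z)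
    (by simpa [enorm_eq_nnnorm, ← NNReal.coe_lt_one] using hz)
  rw [binomialSeries_eq_ordinaryHypergeometricSeries hb, ordinaryHypergeometricSeries,
    FormalMultilinearSeries.ofScalars_comp_neg_id] at this
  simp only [FormalMultilinearSeries.ofScalars_apply_eq, smul_eq_mul] at this
  have hterm (n : ℕ) : (-1) ^ n * ordinaryHypergeometricCoefficient (-a) b b n * (-z) ^ n =
      ordinaryHypergeometricCoefficient (-a) b b n * z ^ n := by
    rw [mul_comm ((-1 : ℝ) ^ n), mul_assoc, ← mul_pow]
    simp
  simpa only [hterm, zero_sub, zero_add, sub_eq_add_neg] using this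

def seqShift (k : ℕ) (f : ℕ → ℝ) (n : ℕ) : ℝ := if k ≤ n then f (n - k) else 0

theorem hasSum_seqShift {f : ℕ → ℝ} {z S : ℝ} (h : HasSum (fun n => f n * z ^ n) S) (k : ℕ) :
    HasSum (fun n => seqShift k f n * z ^ n) (z ^ k * S) := by
  refine ((add_left_injective k).hasSum_iff fun n hn => ?_).mp
    ((h.mul_left (z ^ k)).congr_fun fun n => ?_)
  · have : ¬k ≤ n := fun hkn => hn ⟨n - k, Nat.sub_add_cancel hkn⟩
    simp [seqShift, this]
  · simp only [Function.comp_apply, seqShift, Nat.le_add_left, if_true, Nat.add_sub_cancel,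
      pow_add]
    ring

local notation "𝒜" => ordinaryHypergeometricCoefficient (11 / 3 : ℝ) (1 / 3) (13 / 3)
local notation "ℬ" => ordinaryHypergeometricCoefficient (8 / 3 : ℝ) (1 / 3) (10 / 3)
local notation "𝒞" => ordinaryHypergeometricCoefficient (5 / 3 : ℝ) (1 / 3) (7 / 3)
-- `𝒟 n` is the coefficient of `z ^ n` in `(1 - z) ^ (1 / 3)`, see `hasSum_one_sub_rpow`.
local notation "𝒟" => ordinaryHypergeometricCoefficient (-(1 / 3) : ℝ) (1 / 3) (1 / 3)

theorem coeffD_succ (n : ℕ) : 𝒟 (n + 1) = 𝒟 n * ((3 * n - 1) / (3 * (n + 1))) := by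
  have h := ordinaryHypergeometricCoefficient_succ (-(1 / 3) : ℝ) (1 / 3)
    (natCast_ne_neg_of_pos (c := 1 / 3) (by norm_num)) n
  rw [mul_div_assoc', eq_div_iff (by positivity)]
  refine mul_right_cancel₀ (b := 1 / 3 + (n : ℝ)) (by positivity) ?_
  linear_combination 3 * h

theorem coeffA_eq_coeffD_mul (n : ℕ) :
    𝒜 n = 𝒟 n * (-7 / 2 * ((3 * n - 1) * (3 * n + 2) * (3 * n + 5) * (3 * n + 8))
      / ((3 * n + 1) * (3 * n + 4) * (3 * n + 7) * (3 * n + 10))) := by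
  have h := ordinaryHypergeometricCoefficient_add_natCast (-(1 / 3) : ℝ) (1 / 3)
    (natCast_ne_neg_of_pos (c := 1 / 3) (by norm_num)) 4 n
  norm_num [ascPochhammer_succ_eval] at h
  rw [mul_div_assoc', eq_div_iff (by positivity)]
  linear_combination (-6561 / 80 : ℝ) * h

theorem coeffB_eq_coeffD_mul (n : ℕ) :
    ℬ n = 𝒟 n * (-14 / 5 * ((3 * n - 1) * (3 * n + 2) * (3 * n + 5))
      / ((3 * n + 1) * (3 * n + 4) * (3 * n + 7))) := by
  have h := ordinaryHypergeometricCoefficient_add_natCast (-(1 / 3) : ℝ) (1 / 3)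
    (natCast_ne_neg_of_pos (c := 1 / 3) (by norm_num)) 3 n
  norm_num [ascPochhammer_succ_eval] at h
  rw [mul_div_assoc', eq_div_iff (by positivity)]
  linear_combination (-729 / 10 : ℝ) * h

theorem coeffC_eq_coeffD_mul (n : ℕ) :
    𝒞 n = 𝒟 n * (-2 * ((3 * n - 1) * (3 * n + 2)) / ((3 * n + 1) * (3 * n + 4))) := by
  have h := ordinaryHypergeometricCoefficient_add_natCast (-(1 / 3) : ℝ) (1 / 3)
    (natCast_ne_neg_of_pos (c := 1 / 3) (by norm_num)) 2 n
  norm_num [ascPochhammer_succ_eval] at h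
  rw [mul_div_assoc', eq_div_iff (by positivity)]
  linear_combination (-81 / 2 : ℝ) * h

theorem coeff_identity_add_three (m : ℕ) :
    24 / 7 * (𝒜 (m + 2) - 𝒜 (m + 1) + 𝒜 m)
      - 10 / 21 * (7 * ℬ (m + 3) - 3 * ℬ (m + 2) - 3 * ℬ (m + 1) + 7 * ℬ m)
      + (2 * 𝒞 (m + 3) - 4 * 𝒞 (m + 2) + 2 * 𝒞 (m + 1)) = -(4 / 3) * 𝒟 (m + 3) := by
  simp only [coeffA_eq_coeffD_mul, coeffB_eq_coeffD_mul, coeffC_eq_coeffD_mul, coeffD_succ]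
  push_cast
  field_simp
  ring

theorem coeff_identity (n : ℕ) :
    24 / 7 * (seqShift 1 𝒜 n - seqShift 2 𝒜 n + seqShift 3 𝒜 n)
      - 10 / 21 * (7 * ℬ n - 3 * seqShift 1 ℬ n - 3 * seqShift 2 ℬ n + 7 * seqShift 3 ℬ n)
      + (2 * 𝒞 n - 4 * seqShift 1 𝒞 n + 2 * seqShift 2 𝒞 n) = -(4 / 3) * 𝒟 n := by
  match n with
  | 0 | 1 | 2 =>
    norm_num [seqShift, ordinaryHypergeometricCoefficient, ascPochhammer_succ_eval, Nat.factorial]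
  | m + 3 =>
    simpa [seqShift] using coeff_identity_add_three m

theorem hypF_combination_eq_one_sub_rpow {z : ℝ} (hz : |z| < 1) :
    24 / 7 * (z * (1 - z + z ^ 2)) * hypF (11 / 3) (1 / 3) (13 / 3) z
      - 10 / 21 * (7 - 3 * z - 3 * z ^ 2 + 7 * z ^ 3) * hypF (8 / 3) (1 / 3) (10 / 3) z
      + 2 * (1 - z) ^ 2 * hypF (5 / 3) (1 / 3) (7 / 3) z
      = -(4 / 3) * (1 - z) ^ ((1 : ℝ) / 3) := by
  have hA := hasSum_hypF (11 / 3) (1 / 3) (13 / 3) (natCast_ne_neg_of_pos (by norm_num)) hz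
  have hB := hasSum_hypF (8 / 3) (1 / 3) (10 / 3) (natCast_ne_neg_of_pos (by norm_num)) hz
  have hC := hasSum_hypF (5 / 3) (1 / 3) (7 / 3) (natCast_ne_neg_of_pos (by norm_num)) hz
  have hD := hasSum_one_sub_rpow (1 / 3) (1 / 3) (natCast_ne_neg_of_pos (by norm_num)) hz
  have hA' := (((hasSum_seqShift hA 1).sub (hasSum_seqShift hA 2)).add
    (hasSum_seqShift hA 3)).mul_left (24 / 7)
  have hB' := ((((hB.mul_left 7).sub ((hasSum_seqShift hB 1).mul_left 3)).sub
    ((hasSum_seqShift hB 2).mul_left 3)).add ((hasSum_seqShift hB 3).mul_left 7)).mul_left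
      (10 / 21)
  have hC' := ((hC.mul_left 2).sub ((hasSum_seqShift hC 1).mul_left 4)).add
    ((hasSum_seqShift hC 2).mul_left 2)
  have h := (hD.mul_left (-(4 / 3))).unique (((hA'.sub hB').add hC').congr_fun fun n => by
    linear_combination (-z ^ n) * coeff_identity n)
  linear_combination -h

theorem stmt18 (l : ℝ) (h1 : 1 < l) :
    (24 / 7) * (l ^ 2 - l + 1) * hypF (11 / 3) (1 / 3) (13 / 3) (1 / l)
      - (10 / 21) * (l + 1) * (7 * l ^ 2 - 10 * l + 7) * hypF (8 / 3) (1 / 3) (10 / 3) (1 / l)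
      + 2 * l * (1 - l) ^ 2 * hypF (5 / 3) (1 / 3) (7 / 3) (1 / l)
      = -(4 / 3) * (l - 1) ^ ((1 : ℝ) / 3) * l ^ ((8 : ℝ) / 3) := by
  have hl : 0 < l := by linarith
  have hz : |1 / l| < 1 := by
    rw [abs_of_pos (by positivity), div_lt_one hl]
    exact h1
  have hrpow :
      (l - 1) ^ ((1 : ℝ) / 3) * l ^ ((8 : ℝ) / 3) = (1 - 1 / l) ^ ((1 : ℝ) / 3) * l ^ 3 := by
    rw [show l - 1 = (1 - 1 / l) * l by field_simp,
      Real.mul_rpow (sub_nonneg.mpr ((div_le_one hl).mpr h1.le)) hl.le, mul_assoc,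
      ← Real.rpow_add hl, show (1 : ℝ) / 3 + 8 / 3 = (3 : ℕ) by norm_num, Real.rpow_natCast]
  linear_combination (norm := skip) l ^ 3 * hypF_combination_eq_one_sub_rpow hz + 4 / 3 * hrpow
  field_simp
  ring
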